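/- arXiv:2011.08651 — 3 statements merged into one kernel-verified Lean document; each statement's English description precedes it below -/
import Mathlib

section
/- For any real a > 0 and any bounded measurable f, the TUBA bound holds: D_KL(P ‖ Q) ≥ E_P[f] − E_Q[e^f]/a − log a + 1. -/
/-! With `r = dP/dQ`, which is positive `P`-a.e., `log t ≤ t - 1` at `t = e^f / (a r)` gives
`f ≤ log r + e^f / (a r) + log a - 1` pointwise. Integrating against `P`, the middle term becomes
`∫_{r > 0} e^f dQ / a ≤ E_Q[e^f] / a`. -/

open MeasureTheory Real

/-- KL divergence as the integral of the log Radon–Nikodym derivative. -/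
noncomputable def klDivergence {α : Type*} [MeasurableSpace α] (P Q : Measure α) : ℝ :=
  ∫ x, Real.log ((P.rnDeriv Q x).toReal) ∂P

lemma le_log_add_exp_div_div_add_log_sub_one (y : ℝ) {r a : ℝ} (hr : 0 < r) (ha : 0 < a) :
    y ≤ Real.log r + Real.exp y / r / a + (Real.log a - 1) := by
  have h := Real.log_le_sub_one_of_pos (show 0 < Real.exp y / r / a by positivity)
  rw [Real.log_div (by positivity) ha.ne', Real.log_div (Real.exp_pos y).ne' hr.ne',
    Real.log_exp] at h
  linarith

section ChangeOfMeasure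

variable {α : Type*} [MeasurableSpace α] {P Q : Measure α} {g : α → ℝ}

lemma toReal_rnDeriv_mul_div_toReal_rnDeriv (x : α) :
    (P.rnDeriv Q x).toReal * (g x / (P.rnDeriv Q x).toReal) =
      (Function.support fun x => (P.rnDeriv Q x).toReal).indicator g x := by
  by_cases h : (P.rnDeriv Q x).toReal = 0
  · simp [h]
  · simp [h, Function.mem_support, mul_div_cancel₀]

variable [SigmaFinite P] [P.HaveLebesgueDecomposition Q]

lemma toReal_rnDeriv_pos (hac : P ≪ Q) : ∀ᵐ x ∂P, 0 < (P.rnDeriv Q x).toReal := by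
  filter_upwards [Measure.rnDeriv_pos hac, hac.ae_le (Measure.rnDeriv_lt_top P Q)] with x h0 htop
  exact ENNReal.toReal_pos h0.ne' htop.ne

lemma integrable_div_toReal_rnDeriv (hac : P ≪ Q) (hg : Integrable g Q) :
    Integrable (fun x => g x / (P.rnDeriv Q x).toReal) P := by
  rw [← integrable_toReal_rnDeriv_mul_iff hac, funext toReal_rnDeriv_mul_div_toReal_rnDeriv]
  exact hg.indicator (measurableSet_support (Measure.measurable_rnDeriv P Q).ennreal_toReal)

lemma integral_div_toReal_rnDeriv_le (hac : P ≪ Q) (hg : Integrable g Q) (hg0 : 0 ≤ᵐ[Q] g) :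
    ∫ x, g x / (P.rnDeriv Q x).toReal ∂P ≤ ∫ x, g x ∂Q := by
  rw [← integral_toReal_rnDeriv_mul hac, funext toReal_rnDeriv_mul_div_toReal_rnDeriv,
    integral_indicator (measurableSet_support (Measure.measurable_rnDeriv P Q).ennreal_toReal)]
  exact setIntegral_le_integral hg hg0

end ChangeOfMeasure

/-- TUBA bound: for probability measures `P ≪ Q`, any `a > 0` and any bounded
measurable `f`, `D_KL(P ‖ Q) ≥ E_P[f] - E_Q[e^f]/a - log a + 1`. -/
theorem tuba_lower_bound
    {α : Type*} [MeasurableSpace α]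
    (P Q : Measure α) [IsProbabilityMeasure P] [IsProbabilityMeasure Q]
    (hac : P ≪ Q)
    (hKL : Integrable (fun x => Real.log ((P.rnDeriv Q x).toReal)) P)
    (a : ℝ) (ha : 0 < a)
    (f : α → ℝ) (hf : Measurable f) (M : ℝ) (hbd : ∀ x, |f x| ≤ M) :
    (∫ x, f x ∂P) - (∫ x, Real.exp (f x) ∂Q) / a - Real.log a + 1
      ≤ klDivergence P Q := by
  have hfP : Integrable f P := .of_bound hf.aestronglyMeasurable M (.of_forall hbd)
  have hexpQ : Integrable (fun x => Real.exp (f x)) Q :=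
    .of_bound hf.exp.aestronglyMeasurable (Real.exp M) (.of_forall fun x => by
      simpa using (abs_le.1 (hbd x)).2)
  have hdivP := (integrable_div_toReal_rnDeriv hac hexpQ).div_const a
  have hsumP : Integrable (fun x => Real.log ((P.rnDeriv Q x).toReal) +
      Real.exp (f x) / (P.rnDeriv Q x).toReal / a) P := hKL.add hdivP
  have hpt : ∀ᵐ x ∂P, f x ≤ Real.log ((P.rnDeriv Q x).toReal) +
      Real.exp (f x) / (P.rnDeriv Q x).toReal / a + (Real.log a - 1) := by
    filter_upwards [toReal_rnDeriv_pos hac] with x hx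
    exact le_log_add_exp_div_div_add_log_sub_one (f x) hx ha
  have hbound :
      ∫ x, f x ∂P ≤ klDivergence P Q + (∫ x, Real.exp (f x) ∂Q) / a + (Real.log a - 1) :=
    calc ∫ x, f x ∂P
        ≤ ∫ x, Real.log ((P.rnDeriv Q x).toReal) +
            Real.exp (f x) / (P.rnDeriv Q x).toReal / a + (Real.log a - 1) ∂P :=
          integral_mono_ae hfP (hsumP.add (integrable_const _)) hpt
      _ = klDivergence P Q + (∫ x, Real.exp (f x) / (P.rnDeriv Q x).toReal ∂P) / a +
            (Real.log a - 1) := by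
          rw [integral_add hsumP (integrable_const _), integral_add hKL hdivP,
            integral_div, integral_const]
          simp [klDivergence]
      _ ≤ klDivergence P Q + (∫ x, Real.exp (f x) ∂Q) / a + (Real.log a - 1) := by
          gcongr
          exact integral_div_toReal_rnDeriv_le hac hexpQ (.of_forall fun x => (Real.exp_pos _).le)
  linarith
end

section
/- The function f*(x) = log(dP/dQ(x)) maximizes the GAN discriminator objective E_P[log σ(f(x))] + E_Q[log(1 − σ(f(x)))] over all measurable f, where σ is the logistic sigmoid. -/
open MeasureTheory Real

/-- The logistic sigmoid `σ(t) = 1 / (1 + e^{-t})`. -/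
noncomputable def sigmoid (t : ℝ) : ℝ := (1 + Real.exp (-t))⁻¹

/-!
Pointwise, `r log s + log (1 - s) = (1 + r) (p log s + (1 - p) log (1 - s))` with `p = r / (1 + r)`,
and by Gibbs' inequality for two-point distributions this is largest at `s = p = σ (log r)`.
Writing `E_P[log σ(f)]` as `E_Q[r log σ(f)]` with `r = dP/dQ`, which is positive and finite
`Q`-a.e. by mutual absolute continuity, the objective is the `Q`-integral of that pointwise
quantity, so integrating the pointwise inequality gives the claim.
-/

-- Definitionally equal to `Real.sigmoid`, which makes a bare `sigmoid` ambiguous under `open Real`.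
local notation "σ" => @_root_.sigmoid

lemma sigmoid_log {r : ℝ} (hr : 0 < r) : σ (log r) = r / (1 + r) := by
  rw [_root_.sigmoid, exp_neg, exp_log hr]
  field_simp
  ring

lemma mul_log_le_mul_log_add_sub {a x : ℝ} (ha : 0 ≤ a) (hx : 0 < x) :
    a * log x ≤ a * log a + (x - a) := by
  rcases ha.eq_or_lt with rfl | ha
  · simpa using hx.le
  have h := mul_le_mul_of_nonneg_left (log_le_sub_one_of_pos (div_pos hx ha)) ha.le
  rw [log_div hx.ne' ha.ne', mul_sub, mul_sub, mul_div_cancel₀ x ha.ne', mul_one] at h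
  linarith

lemma mul_log_add_one_sub_mul_log_one_sub_le {p s : ℝ} (hp₀ : 0 ≤ p) (hp₁ : p ≤ 1)
    (hs₀ : 0 < s) (hs₁ : s < 1) :
    p * log s + (1 - p) * log (1 - s) ≤ p * log p + (1 - p) * log (1 - p) := by
  have h₁ := mul_log_le_mul_log_add_sub hp₀ hs₀
  have h₂ := mul_log_le_mul_log_add_sub (sub_nonneg.2 hp₁) (sub_pos.2 hs₁)
  linarith

lemma mul_log_sigmoid_add_log_one_sub_sigmoid_le {r : ℝ} (hr : 0 < r) (t : ℝ) :
    r * log (σ t) + log (1 - σ t) ≤ r * log (σ (log r)) + log (1 - σ (log r)) := by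
  set p := σ (log r)
  have hp : p = r / (1 + r) := sigmoid_log hr
  have hr_eq : r = (1 + r) * p := by rw [hp]; field_simp
  have h_one : 1 = (1 + r) * (1 - p) := by rw [hp]; field_simp; ring
  have hp₀ : 0 ≤ p := (Real.sigmoid_pos _).le
  have hp₁ : p ≤ 1 := (Real.sigmoid_lt_one _).le
  have hs₀ : 0 < σ t := Real.sigmoid_pos t
  have hs₁ : σ t < 1 := Real.sigmoid_lt_one t
  have gibbs := mul_le_mul_of_nonneg_left (mul_log_add_one_sub_mul_log_one_sub_le hp₀ hp₁ hs₀ hs₁)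
    (by positivity : (0 : ℝ) ≤ 1 + r)
  linear_combination gibbs + (log (σ t) - log p) * hr_eq + (log (1 - σ t) - log (1 - p)) * h_one

section RadonNikodym

variable {α : Type*} [MeasurableSpace α] {P Q : Measure α} [SigmaFinite P] [SigmaFinite Q]

lemma Measure.ae_toReal_rnDeriv_pos (hQP : Q ≪ P) : ∀ᵐ x ∂Q, 0 < (P.rnDeriv Q x).toReal := by
  filter_upwards [Measure.rnDeriv_pos' hQP, Measure.rnDeriv_lt_top P Q] with x hpos hlt
  exact ENNReal.toReal_pos hpos.ne' hlt.ne

lemma integrable_toReal_rnDeriv_mul_add (hPQ : P ≪ Q) {g h : α → ℝ} (hg : Integrable g P)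
    (hh : Integrable h Q) : Integrable (fun x ↦ (P.rnDeriv Q x).toReal * g x + h x) Q :=
  ((integrable_toReal_rnDeriv_mul_iff hPQ).2 hg).add hh

lemma integral_add_integral_eq_integral_toReal_rnDeriv_mul_add (hPQ : P ≪ Q) {g h : α → ℝ}
    (hg : Integrable g P) (hh : Integrable h Q) :
    ∫ x, g x ∂P + ∫ x, h x ∂Q = ∫ x, (P.rnDeriv Q x).toReal * g x + h x ∂Q := by
  rw [integral_add ((integrable_toReal_rnDeriv_mul_iff hPQ).2 hg) hh,
    integral_toReal_rnDeriv_mul hPQ]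

lemma integral_add_integral_le_of_ae_toReal_rnDeriv_mul_add_le (hPQ : P ≪ Q)
    {g₁ h₁ g₂ h₂ : α → ℝ} (hg₁ : Integrable g₁ P) (hh₁ : Integrable h₁ Q)
    (hg₂ : Integrable g₂ P) (hh₂ : Integrable h₂ Q)
    (hle : ∀ᵐ x ∂Q, (P.rnDeriv Q x).toReal * g₁ x + h₁ x ≤ (P.rnDeriv Q x).toReal * g₂ x + h₂ x) :
    ∫ x, g₁ x ∂P + ∫ x, h₁ x ∂Q ≤ ∫ x, g₂ x ∂P + ∫ x, h₂ x ∂Q := by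
  rw [integral_add_integral_eq_integral_toReal_rnDeriv_mul_add hPQ hg₁ hh₁,
    integral_add_integral_eq_integral_toReal_rnDeriv_mul_add hPQ hg₂ hh₂]
  exact integral_mono_ae (integrable_toReal_rnDeriv_mul_add hPQ hg₁ hh₁)
    (integrable_toReal_rnDeriv_mul_add hPQ hg₂ hh₂) hle

end RadonNikodym

theorem gan_objective_maximized_by_log_density_ratio_general
    {α : Type*} [MeasurableSpace α]
    (P Q : Measure α) [IsProbabilityMeasure P] [IsProbabilityMeasure Q]
    (hPQ : P ≪ Q) (hQP : Q ≪ P)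
    (fstar : α → ℝ)
    (hfstar : ∀ x, fstar x = Real.log ((P.rnDeriv Q x).toReal))
    (hstar1 : Integrable (fun x => Real.log (_root_.sigmoid (fstar x))) P)
    (hstar2 : Integrable (fun x => Real.log (1 - _root_.sigmoid (fstar x))) Q)
    (f : α → ℝ)
    (hint1 : Integrable (fun x => Real.log (_root_.sigmoid (f x))) P)
    (hint2 : Integrable (fun x => Real.log (1 - _root_.sigmoid (f x))) Q) :
    (∫ x, Real.log (_root_.sigmoid (f x)) ∂P) + (∫ x, Real.log (1 - _root_.sigmoid (f x)) ∂Q)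
      ≤ (∫ x, Real.log (_root_.sigmoid (fstar x)) ∂P)
          + (∫ x, Real.log (1 - _root_.sigmoid (fstar x)) ∂Q) := by
  refine integral_add_integral_le_of_ae_toReal_rnDeriv_mul_add_le hPQ hint1 hint2 hstar1 hstar2 ?_
  filter_upwards [Measure.ae_toReal_rnDeriv_pos hQP] with x hx
  rw [hfstar x]
  exact mul_log_sigmoid_add_log_one_sub_sigmoid_le hx (f x)

/-- The critic `f* = log (dP/dQ)` maximizes the GAN discriminator objective
`E_P[log σ(f)] + E_Q[log (1 - σ(f))]` over all measurable critics `f`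
(for which the objective is well defined). -/
theorem gan_objective_maximized_by_log_density_ratio
    {α : Type*} [MeasurableSpace α]
    (P Q : Measure α) [IsProbabilityMeasure P] [IsProbabilityMeasure Q]
    (hPQ : P ≪ Q) (hQP : Q ≪ P)
    (fstar : α → ℝ)
    (hfstar : ∀ x, fstar x = Real.log ((P.rnDeriv Q x).toReal))
    (hstar1 : Integrable (fun x => Real.log (_root_.sigmoid (fstar x))) P)
    (hstar2 : Integrable (fun x => Real.log (1 - _root_.sigmoid (fstar x))) Q)
    (f : α → ℝ) (hf : Measurable f)
    (hint1 : Integrable (fun x => Real.log (_root_.sigmoid (f x))) P)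
    (hint2 : Integrable (fun x => Real.log (1 - _root_.sigmoid (f x))) Q) :
    (∫ x, Real.log (_root_.sigmoid (f x)) ∂P) + (∫ x, Real.log (1 - _root_.sigmoid (f x)) ∂Q)
      ≤ (∫ x, Real.log (_root_.sigmoid (fstar x)) ∂P)
          + (∫ x, Real.log (1 - _root_.sigmoid (fstar x)) ∂Q) :=
  gan_objective_maximized_by_log_density_ratio_general P Q hPQ hQP fstar hfstar hstar1 hstar2 f
    hint1 hint2
end

section
/- Let F be a class of functions uniformly bounded by M and let ψ : [−M, M] → ℝ be L-Lipschitz. Then the empirical Rademacher complexity satisfies R̂ₙ(ψ ∘ F) ≤ L · R̂ₙ(F), where ψ ∘ F = {ψ ∘ f : f ∈ F}. -/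
/-!
Fix a coordinate `j` and pair each sign vector with the one that differs from it only at `j`.
The pair contributes `sup_f (G f + ψ (f xⱼ)) + sup_g (G g - ψ (g xⱼ))`, with `G` collecting the
other coordinates, and since `|ψ (f xⱼ) - ψ (g xⱼ)| ≤ L |f xⱼ - g xⱼ|` every summand
`G f + ψ (f xⱼ) + G g - ψ (g xⱼ)` is bounded by the same pair of suprema for `t ↦ L t`, with `f`
and `g` ordered by the value at `xⱼ`. Replacing `ψ` by `t ↦ L t` in one coordinate after the
other ends at `L` times the Rademacher complexity of `F`.
-/

open Finset

/-- Rademacher sign associated to a boolean. -/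
def radSign (b : Bool) : ℝ := if b then 1 else -1

/-- Empirical Rademacher complexity of a class `F` of real-valued functions on the
sample `x₁,…,xₙ`, as an average over all `2ⁿ` sign vectors. -/
noncomputable def radComplexity {X : Type*} {n : ℕ} (F : Set (X → ℝ)) (x : Fin n → X) : ℝ :=
  (2 ^ n : ℝ)⁻¹ *
    ∑ σ : Fin n → Bool,
      sSup ((fun f : X → ℝ => (n : ℝ)⁻¹ * ∑ i : Fin n, radSign (σ i) * f (x i)) '' F)

section Contraction

variable {ι κ : Type*}

theorem csSup_add_csSup_le {A B : Set ℝ} (hA : A.Nonempty) (hB : B.Nonempty) {c : ℝ}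
    (h : ∀ a ∈ A, ∀ b ∈ B, a + b ≤ c) : sSup A + sSup B ≤ c := by
  suffices sSup A ≤ c - sSup B by linarith
  refine csSup_le hA fun a ha => le_sub_comm.1 (csSup_le hB fun b hb => ?_)
  linarith [h a ha b hb]

theorem exists_abs_le_of_abs_sub_le {F : Set ι} (hF : F.Nonempty) {a b : ι → ℝ}
    (hab : ∀ f ∈ F, ∀ g ∈ F, |a f - a g| ≤ |b f - b g|) (hb : ∃ C, ∀ f ∈ F, |b f| ≤ C) :
    ∃ C, ∀ f ∈ F, |a f| ≤ C := by
  obtain ⟨f₀, hf₀⟩ := hF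
  obtain ⟨C, hC⟩ := hb
  refine ⟨|a f₀| + 2 * C, fun f hf => ?_⟩
  have hff₀ := hab f hf f₀ hf₀
  linarith [abs_sub_abs_le_abs_sub (a f) (a f₀), abs_sub (b f) (b f₀), hC f hf, hC f₀ hf₀]

theorem abs_radSign (b : Bool) : |radSign b| = 1 := by
  cases b <;> simp [radSign]

theorem exists_abs_sum_radSign_mul_le [Fintype κ] {F : Set ι} (τ : κ → Bool) {a : κ → ι → ℝ}
    (ha : ∀ k, ∃ C, ∀ f ∈ F, |a k f| ≤ C) :
    ∃ C, ∀ f ∈ F, |∑ k, radSign (τ k) * a k f| ≤ C := by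
  choose C hC using ha
  refine ⟨∑ k, C k, fun f hf => (abs_sum_le_sum_abs _ _).trans (Finset.sum_le_sum fun k _ => ?_)⟩
  rw [abs_mul, abs_radSign, one_mul]
  exact hC k f hf

theorem sSup_add_sSup_le_of_abs_sub_le {F : Set ι} (hF : F.Nonempty) {G φ u : ι → ℝ}
    (hφ : ∀ f ∈ F, ∀ g ∈ F, |φ f - φ g| ≤ |u f - u g|)
    (hG : ∃ C, ∀ f ∈ F, |G f| ≤ C) (hu : ∃ C, ∀ f ∈ F, |u f| ≤ C) :
    sSup ((fun f => G f + φ f) '' F) + sSup ((fun f => G f - φ f) '' F) ≤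
      sSup ((fun f => G f + u f) '' F) + sSup ((fun f => G f - u f) '' F) := by
  obtain ⟨CG, hCG⟩ := hG
  obtain ⟨Cu, hCu⟩ := hu
  have hplus : BddAbove ((fun f => G f + u f) '' F) := ⟨CG + Cu, by
    rintro _ ⟨f, hf, rfl⟩
    linarith [le_abs_self (G f), le_abs_self (u f), hCG f hf, hCu f hf]⟩
  have hminus : BddAbove ((fun f => G f - u f) '' F) := ⟨CG + Cu, by
    rintro _ ⟨f, hf, rfl⟩
    linarith [le_abs_self (G f), neg_abs_le (u f), hCG f hf, hCu f hf]⟩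
  refine csSup_add_csSup_le (hF.image _) (hF.image _) ?_
  rintro _ ⟨f, hf, rfl⟩ _ ⟨g, hg, rfl⟩
  have hfg := (le_abs_self _).trans (hφ f hf g hg)
  rcases le_total (u g) (u f) with h | h
  · rw [abs_of_nonneg (sub_nonneg.2 h)] at hfg
    linarith [le_csSup hplus ⟨f, hf, rfl⟩, le_csSup hminus ⟨g, hg, rfl⟩]
  · rw [abs_of_nonpos (sub_nonpos.2 h)] at hfg
    linarith [le_csSup hplus ⟨g, hg, rfl⟩, le_csSup hminus ⟨f, hf, rfl⟩]

section rademacherSum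

variable [Fintype κ] [DecidableEq κ]

noncomputable def rademacherSum (F : Set ι) (w : κ → ι → ℝ) : ℝ :=
  ∑ σ : κ → Bool, sSup ((fun f => ∑ k, radSign (σ k) * w k f) '' F)

theorem sum_radSign_funSplitAt_symm (j : κ) (b : Bool) (τ : {k // k ≠ j} → Bool) (a : κ → ℝ) :
    ∑ k, radSign ((Equiv.funSplitAt j Bool).symm (b, τ) k) * a k =
      ∑ k : {k // k ≠ j}, radSign (τ k) * a k + radSign b * a j := by
  rw [Fintype.sum_eq_add_sum_subtype_ne _ j, add_comm, Equiv.funSplitAt_symm_apply, dif_pos rfl]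
  congr 1
  exact Finset.sum_congr rfl fun k _ => by rw [Equiv.funSplitAt_symm_apply, dif_neg k.2]

theorem rademacherSum_eq_sum_split (F : Set ι) (w : κ → ι → ℝ) (j : κ) :
    rademacherSum F w = ∑ τ : {k // k ≠ j} → Bool,
      (sSup ((fun f => (∑ k : {k // k ≠ j}, radSign (τ k) * w k f) + w j f) '' F) +
        sSup ((fun f => (∑ k : {k // k ≠ j}, radSign (τ k) * w k f) - w j f) '' F)) := by
  unfold rademacherSum
  rw [← (Equiv.funSplitAt j Bool).symm.sum_comp, Fintype.sum_prod_type, Fintype.sum_bool,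
    ← Finset.sum_add_distrib]
  simp only [sum_radSign_funSplitAt_symm]
  simp only [radSign, if_true, Bool.false_eq_true, if_false, one_mul, neg_one_mul, ← sub_eq_add_neg]

theorem rademacherSum_update_le {F : Set ι} (hF : F.Nonempty) (w : κ → ι → ℝ) (j : κ)
    {φ u : ι → ℝ} (hφ : ∀ f ∈ F, ∀ g ∈ F, |φ f - φ g| ≤ |u f - u g|)
    (hw : ∀ k ≠ j, ∃ C, ∀ f ∈ F, |w k f| ≤ C) (hu : ∃ C, ∀ f ∈ F, |u f| ≤ C) :
    rademacherSum F (Function.update w j φ) ≤ rademacherSum F (Function.update w j u) := by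
  have hwk (v : ι → ℝ) (k : {k // k ≠ j}) : Function.update w j v k = w k :=
    Function.update_of_ne k.2 v w
  simp only [rademacherSum_eq_sum_split _ _ j, Function.update_self, hwk]
  exact Finset.sum_le_sum fun τ _ => sSup_add_sSup_le_of_abs_sub_le hF hφ
    (exists_abs_sum_radSign_mul_le τ fun k => hw k k.2) hu

theorem rademacherSum_le_of_abs_sub_le {F : Set ι} (hF : F.Nonempty) {w w' : κ → ι → ℝ}
    (hww' : ∀ k, ∀ f ∈ F, ∀ g ∈ F, |w k f - w k g| ≤ |w' k f - w' k g|)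
    (hw' : ∀ k, ∃ C, ∀ f ∈ F, |w' k f| ≤ C) :
    rademacherSum F w ≤ rademacherSum F w' := by
  have hw k := exists_abs_le_of_abs_sub_le hF (hww' k) (hw' k)
  suffices ∀ T : Finset κ, rademacherSum F w ≤ rademacherSum F (T.piecewise w' w) by
    simpa using this Finset.univ
  intro T
  induction T using Finset.induction_on with
  | empty => rw [Finset.piecewise_empty]
  | insert j T hj ih =>
    refine ih.trans ?_
    conv_lhs => rw [← Function.update_eq_self j (T.piecewise w' w), T.piecewise_eq_of_notMem _ _ hj]
    rw [Finset.piecewise_insert]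
    exact rademacherSum_update_le hF _ j (hww' j)
      (fun k _ => T.piecewise_cases w' w (fun v : ι → ℝ => ∃ C, ∀ f ∈ F, |v f| ≤ C) (hw' k) (hw k))
      (hw' j)

open scoped Pointwise in
theorem rademacherSum_const_mul (F : Set ι) (w : κ → ι → ℝ) {c : ℝ} (hc : 0 ≤ c) :
    rademacherSum F (fun k f => c * w k f) = c * rademacherSum F w := by
  rw [rademacherSum, rademacherSum, Finset.mul_sum]
  refine Finset.sum_congr rfl fun σ _ => ?_
  have : (fun f => ∑ k, radSign (σ k) * (c * w k f)) '' F =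
      c • ((fun f => ∑ k, radSign (σ k) * w k f) '' F) := by
    rw [← Set.image_smul, Set.image_image]
    simp only [smul_eq_mul, Finset.mul_sum, mul_left_comm c]
  rw [this, Real.sSup_smul_of_nonneg hc, smul_eq_mul]

theorem rademacherSum_image {ι' : Type*} (g : ι' → ι) (F : Set ι') (w : κ → ι → ℝ) :
    rademacherSum (g '' F) w = rademacherSum F (fun k f => w k (g f)) := by
  simp only [rademacherSum, Set.image_image]

end rademacherSum

end Contraction

theorem radComplexity_eq_rademacherSum {X : Type*} {n : ℕ} (F : Set (X → ℝ)) (x : Fin n → X) :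
    radComplexity F x = (2 ^ n : ℝ)⁻¹ * ((n : ℝ)⁻¹ * rademacherSum F fun i f => f (x i)) := by
  rw [← rademacherSum_const_mul _ _ (by positivity), radComplexity, rademacherSum]
  simp only [Finset.mul_sum, mul_left_comm (n : ℝ)⁻¹]

theorem rademacher_contraction_general {X : Type*} {n : ℕ}
    (F : Set (X → ℝ)) (hF : F.Nonempty) (x : Fin n → X)
    (M : ℝ) (hbd : ∀ f ∈ F, ∀ y : X, |f y| ≤ M)
    (ψ : ℝ → ℝ) (L : ℝ) (hL : 0 ≤ L)
    (hlip : ∀ s ∈ Set.Icc (-M) M, ∀ t ∈ Set.Icc (-M) M, |ψ s - ψ t| ≤ L * |s - t|) :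
    radComplexity ((fun f : X → ℝ => ψ ∘ f) '' F) x ≤ L * radComplexity F x := by
  have hψ (i : Fin n) : ∀ f ∈ F, ∀ g ∈ F,
      |ψ (f (x i)) - ψ (g (x i))| ≤ |L * f (x i) - L * g (x i)| := by
    intro f hf g hg
    rw [← mul_sub, abs_mul, abs_of_nonneg hL]
    exact hlip _ (abs_le.1 (hbd f hf _)) _ (abs_le.1 (hbd g hg _))
  have hLbd (i : Fin n) : ∃ C, ∀ f ∈ F, |L * f (x i)| ≤ C :=
    ⟨L * M, fun f hf => by
      rw [abs_mul, abs_of_nonneg hL]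
      exact mul_le_mul_of_nonneg_left (hbd f hf _) hL⟩
  rw [radComplexity_eq_rademacherSum, radComplexity_eq_rademacherSum, rademacherSum_image,
    mul_left_comm L, mul_left_comm L, ← rademacherSum_const_mul _ _ hL]
  gcongr
  exact rademacherSum_le_of_abs_sub_le hF hψ hLbd

/-- Talagrand's contraction lemma: if `F` is uniformly bounded by `M` and
`ψ` is `L`-Lipschitz on `[-M, M]`, then `R̂ₙ(ψ ∘ F) ≤ L · R̂ₙ(F)`. -/
theorem rademacher_contraction {X : Type*} {n : ℕ} (hn : 0 < n)
    (F : Set (X → ℝ)) (hF : F.Nonempty) (x : Fin n → X)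
    (M : ℝ) (hbd : ∀ f ∈ F, ∀ y : X, |f y| ≤ M)
    (ψ : ℝ → ℝ) (L : ℝ) (hL : 0 ≤ L)
    (hlip : ∀ s ∈ Set.Icc (-M) M, ∀ t ∈ Set.Icc (-M) M, |ψ s - ψ t| ≤ L * |s - t|) :
    radComplexity ((fun f : X → ℝ => ψ ∘ f) '' F) x ≤ L * radComplexity F x :=
  rademacher_contraction_general F hF x M hbd ψ L hL hlip
end
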